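/- arXiv:1910.08682 — 4 statements merged into one kernel-verified Lean document; each statement's English description precedes it below -/
import Mathlib

section
/- Let $X$ be a compact Hausdorff space with a continuous action of a discrete group $\Gamma$, and consider the induced affine action of $\Gamma$ on the space $\mathrm{Prob}(X)$ of regular Borel probability measures on $X$ with the weak*-topology. If $x \in X$ is a properly proximal point for the action $\Gamma \curvearrowright X$, then the Dirac measure $\delta_x$ is a properly proximal point for the action $\Gamma \curvearrowright \mathrm{Prob}(X)$. -/
open MeasureTheory

/-- `y` is a properly proximal point for the action `act` of `Γ` on the topological
space `Y`: for every open neighborhood `O` of the diagonal, there is a finite set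
`F ⊆ Γ` with `(γ g y, γ y) ∈ O` for all `g ∈ Γ` and all `γ ∉ F`. -/
def ProperlyProximalPt {Γ Y : Type*} [TopologicalSpace Y] (act : Γ → Y → Y) (y : Y) : Prop :=
  ∀ O : Set (Y × Y), IsOpen O → (∀ z : Y, (z, z) ∈ O) →
    ∃ F : Finset Γ, ∀ g : Γ, ∀ γ : Γ, γ ∉ F → (act γ (act g y), act γ y) ∈ O

theorem ProperlyProximalPt.map {Γ Y Z : Type*} [TopologicalSpace Y] [TopologicalSpace Z]
    {actY : Γ → Y → Y} {actZ : Γ → Z → Z} {f : Y → Z} (hf : Continuous f)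
    (hequiv : ∀ γ y, actZ γ (f y) = f (actY γ y)) {y : Y} (hy : ProperlyProximalPt actY y) :
    ProperlyProximalPt actZ (f y) := by
  intro O hO hdiag
  obtain ⟨F, hF⟩ := hy (Prod.map f f ⁻¹' O) (hO.preimage (hf.prodMap hf)) fun z => hdiag (f z)
  refine ⟨F, fun g γ hγ => ?_⟩
  simpa only [Set.mem_preimage, Prod.map, hequiv] using hF g γ hγ

theorem MeasureTheory.ProbabilityMeasure.map_diracProba {X Y : Type*}
    [MeasurableSpace X] [MeasurableSpace Y] {f : X → Y} (hf : Measurable f) (x : X) :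
    (diracProba x).map hf.aemeasurable = diracProba (f x) :=
  Subtype.ext (Measure.map_dirac' hf x)

theorem stmt_2_general {Γ X : Type*} [TopologicalSpace X]
    [MeasurableSpace X] [BorelSpace X]
    (ρ : Γ → X ≃ₜ X)
    (x : X) (hx : ProperlyProximalPt (fun γ => ⇑(ρ γ)) x) :
    ProperlyProximalPt
      (fun γ (μ : ProbabilityMeasure X) =>
        μ.map ((ρ γ).continuous.measurable.aemeasurable))
      ⟨Measure.dirac x, inferInstance⟩ :=
  hx.map continuous_diracProba fun γ y =>
    ProbabilityMeasure.map_diracProba (ρ γ).continuous.measurable y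

/-- If `x` is a properly proximal point for an action of `Γ` by homeomorphisms on the
compact Hausdorff space `X`, then the Dirac mass `δ_x` is a properly proximal point for
the induced action on `Prob(X)` with the weak*-topology. -/
theorem stmt_2 {Γ X : Type*} [Group Γ] [TopologicalSpace X] [CompactSpace X] [T2Space X]
    [MeasurableSpace X] [BorelSpace X]
    (ρ : Γ → X ≃ₜ X)
    (hone : ∀ x, ρ 1 x = x) (hmul : ∀ g h x, ρ (g * h) x = ρ g (ρ h x))
    (x : X) (hx : ProperlyProximalPt (fun γ => ⇑(ρ γ)) x) :
    ProperlyProximalPt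
      (fun γ (μ : ProbabilityMeasure X) =>
        μ.map ((ρ γ).continuous.measurable.aemeasurable))
      ⟨Measure.dirac x, inferInstance⟩ :=
  stmt_2_general ρ x hx
end

section
/- Let $\Gamma \curvearrowright (X,\mu)$ be a probability measure-preserving action, $\Lambda$ a countable group, $\alpha: \Gamma \times X \to \Lambda$ a measurable cocycle (i.e., $\alpha(\gamma_1 \gamma_2, x) = \alpha(\gamma_1, \gamma_2 x)\alpha(\gamma_2, x)$ a.e.), and $K$ a nonempty weak*-compact convex $\Lambda$-invariant subset of the dual $E$ of a separable Banach space $E_*$ on which $\Lambda$ acts by dual isometries. If the cocycle $\alpha$ arises from a measure equivalence coupling $(\Omega, m)$ with $X = \Omega/\Lambda$, then the induced $\Gamma$-action on $L^\infty(X; K)$ given by $(\gamma \cdot f)(x) = \alpha(\gamma, \gamma^{-1}x) f(\gamma^{-1}x)$ has a fixed point if and only if $K$ has a $\Lambda$-fixed point. -/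
open MeasureTheory
open scoped Pointwise

/-- Induced actions via a measure equivalence coupling: given a coupling `(Ω, m)` of `Γ`
and `Λ` with finite-measure fundamental domains `X` (for `Λ`) and `Y` (for `Γ`), the
Zimmer cocycle `α`, and a `Λ`-action by dual isometries on `E = (E₀)*` preserving a
nonempty weak*-compact convex set `K`, the induced `Γ`-action on `L^∞(X; K)` has a fixed
point if and only if `K` has a `Λ`-fixed point. -/
theorem stmt_10 {Γ Λ Ω E₀ : Type*} [Group Γ] [Countable Γ] [Group Λ] [Countable Λ]
    [MeasurableSpace Ω]
    [NormedAddCommGroup E₀] [NormedSpace ℝ E₀] [TopologicalSpace.SeparableSpace E₀]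
    (m : Measure Ω) [SigmaFinite m]
    (actΓ : Γ → Ω → Ω) (actΛ : Λ → Ω → Ω)
    (hΓone : ∀ ω, actΓ 1 ω = ω) (hΓmul : ∀ g h ω, actΓ (g * h) ω = actΓ g (actΓ h ω))
    (hΛone : ∀ ω, actΛ 1 ω = ω) (hΛmul : ∀ g h ω, actΛ (g * h) ω = actΛ g (actΛ h ω))
    (hΓmp : ∀ g, MeasurePreserving (actΓ g) m m)
    (hΛmp : ∀ l, MeasurePreserving (actΛ l) m m)
    (hcomm : ∀ g l ω, actΓ g (actΛ l ω) = actΛ l (actΓ g ω))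
    -- `X` is a finite-measure fundamental domain for `Λ`
    (X : Set Ω) (hX : MeasurableSet X) (hXfin : m X < ⊤) (hXpos : 0 < m X)
    (hXdisj : ∀ l l' : Λ, l ≠ l' → m (actΛ l '' X ∩ actΛ l' '' X) = 0)
    (hXfull : m ((⋃ l : Λ, actΛ l '' X)ᶜ) = 0)
    -- `Y` is a finite-measure fundamental domain for `Γ`
    (Y : Set Ω) (hY : MeasurableSet Y) (hYfin : m Y < ⊤)
    (hYdisj : ∀ g g' : Γ, g ≠ g' → m (actΓ g '' Y ∩ actΓ g' '' Y) = 0)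
    (hYfull : m ((⋃ g : Γ, actΓ g '' Y)ᶜ) = 0)
    -- the Zimmer cocycle: `α(g, ω)` brings `actΓ g ω` back into `X`
    (α : Γ → Ω → Λ)
    (hα : ∀ g : Γ, ∀ᵐ ω ∂(m.restrict X), actΛ (α g ω) (actΓ g ω) ∈ X)
    (hαmeas : ∀ (g : Γ) (l : Λ), MeasurableSet {ω | α g ω = l})
    -- `Λ` acts by dual isometries on `E = (E₀)*`, dual to an (anti-)action on `E₀`
    (ρ : Λ → E₀ →ₗᵢ[ℝ] E₀)
    (hρone : ∀ v, ρ 1 v = v) (hρmul : ∀ a b v, ρ (a * b) v = ρ b (ρ a v))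
    (hρsurj : ∀ l, Function.Surjective (ρ l))
    -- `K` is a nonempty weak*-compact convex `Λ`-invariant subset of `E`
    (K : Set (WeakDual ℝ E₀)) (hKne : K.Nonempty) (hKcomp : IsCompact K)
    (hKconv : Convex ℝ K)
    (hKinv : ∀ (l : Λ) (φ : WeakDual ℝ E₀), φ ∈ K →
      (φ.comp (ρ l).toContinuousLinearMap : WeakDual ℝ E₀) ∈ K) :
    (∃ f : Ω → WeakDual ℝ E₀,
      (∀ v : E₀, Measurable fun ω => f ω v) ∧
      (∀ᵐ ω ∂(m.restrict X), f ω ∈ K) ∧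
      (∀ g : Γ, ∀ᵐ ω ∂(m.restrict X),
        f (actΛ (α g ω) (actΓ g ω)) = (f ω).comp (ρ (α g ω)).toContinuousLinearMap))
    ↔ ∃ k ∈ K, ∀ l : Λ, (k.comp (ρ l).toContinuousLinearMap : WeakDual ℝ E₀) = k := by
  constructor
  · -- hard direction
    rintro ⟨f, hfmeas, hfK, hfequiv⟩
    classical
    -- basic action facts
    have hΛinv₁ : ∀ (l : Λ) ω, actΛ l⁻¹ (actΛ l ω) = ω := fun l ω => by
      rw [← hΛmul, inv_mul_cancel, hΛone]
    have hΛinv₂ : ∀ (l : Λ) ω, actΛ l (actΛ l⁻¹ ω) = ω := fun l ω => by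
      rw [← hΛmul, mul_inv_cancel, hΛone]
    have hΓinv₁ : ∀ (g : Γ) ω, actΓ g⁻¹ (actΓ g ω) = ω := fun g ω => by
      rw [← hΓmul, inv_mul_cancel, hΓone]
    have himg : ∀ (l : Λ) (S : Set Ω), actΛ l '' S = actΛ l⁻¹ ⁻¹' S := by
      intro l S
      ext ω
      constructor
      · rintro ⟨x, hx, rfl⟩
        rw [Set.mem_preimage, hΛinv₁]
        exact hx
      · intro h
        exact ⟨actΛ l⁻¹ ω, h, hΛinv₂ l ω⟩
    have himgΓ : ∀ (g : Γ) (S : Set Ω), actΓ g '' S = actΓ g⁻¹ ⁻¹' S := by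
      intro g S
      ext ω
      constructor
      · rintro ⟨x, hx, rfl⟩
        rw [Set.mem_preimage, hΓinv₁]
        exact hx
      · intro h
        refine ⟨actΓ g⁻¹ ω, h, ?_⟩
        rw [← hΓmul, mul_inv_cancel, hΓone]
    -- pullback of a.e. statements
    have hpullΓ : ∀ (g : Γ) (p : Ω → Prop), (∀ᵐ ω ∂m, p ω) → ∀ᵐ ω ∂m, p (actΓ g ω) := by
      intro g p hp
      rw [ae_iff] at hp ⊢
      exact (hΓmp g).quasiMeasurePreserving.preimage_null hp
    have hpullΛ : ∀ (l : Λ) (p : Ω → Prop), (∀ᵐ ω ∂m, p ω) → ∀ᵐ ω ∂m, p (actΛ l ω) := by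
      intro l p hp
      rw [ae_iff] at hp ⊢
      exact (hΛmp l).quasiMeasurePreserving.preimage_null hp
    -- selection of a representative label
    obtain ⟨e, he⟩ := exists_surjective_nat Λ
    set P : Λ → Ω → Prop := fun l ω => actΛ l⁻¹ ω ∈ X with hP
    have hPmeas : ∀ l, MeasurableSet {ω | P l ω} := fun l => (hΛmp l⁻¹).measurable hX
    set σ : Ω → Λ := fun ω => if h : ∃ n, P (e n) ω then e (Nat.find h) else 1 with hσ
    have hσspec : ∀ ω, (∃ l, P l ω) → P (σ ω) ω := by
      rintro ω ⟨l, hl⟩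
      obtain ⟨n, rfl⟩ := he l
      have hex : ∃ n', P (e n') ω := ⟨n, hl⟩
      simp only [hσ, dif_pos hex]
      exact Nat.find_spec hex
    have hσmeas : ∀ l : Λ, MeasurableSet {ω | σ ω = l} := by
      intro l
      have hdec : {ω | σ ω = l} =
          ((⋃ n : ℕ, {ω | P (e n) ω})ᶜ ∩ {_ω : Ω | (1 : Λ) = l}) ∪
          ⋃ n : ℕ, ({_ω : Ω | e n = l} ∩ ({ω | P (e n) ω} ∩
            ⋂ i : ℕ, ⋂ _ : i < n, {ω | P (e i) ω}ᶜ)) := by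
        ext ω
        by_cases h : ∃ n, P (e n) ω
        · simp only [Set.mem_setOf_eq, Set.mem_union, Set.mem_inter_iff, Set.mem_iUnion,
            Set.mem_iInter, Set.mem_compl_iff, hσ, dif_pos h]
          constructor
          · intro hl
            exact Or.inr ⟨Nat.find h, hl, Nat.find_spec h, fun i hi => Nat.find_min h hi⟩
          · rintro (⟨hn, _⟩ | ⟨n, hel, hp, hmin⟩)
            · exact absurd h hn
            · have hfind : Nat.find h = n := (Nat.find_eq_iff h).mpr ⟨hp, fun q hq => hmin q hq⟩
              rw [hfind]
              exact hel
        · simp only [Set.mem_setOf_eq, Set.mem_union, Set.mem_inter_iff, Set.mem_iUnion,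
            Set.mem_iInter, Set.mem_compl_iff, hσ, dif_neg h]
          constructor
          · intro hl
            exact Or.inl ⟨h, hl⟩
          · intro hcase
            rcases hcase with hleft | hright
            · exact hleft.2
            · exfalso
              obtain ⟨n, hn⟩ := hright
              exact h ⟨n, hn.2.1⟩
      rw [hdec]
      refine MeasurableSet.union
        (((MeasurableSet.iUnion fun n => hPmeas (e n)).compl).inter (MeasurableSet.const _))
        (MeasurableSet.iUnion fun n => (MeasurableSet.const _).inter
          ((hPmeas (e n)).inter (MeasurableSet.iInter fun i =>
            MeasurableSet.iInter fun _ => (hPmeas (e i)).compl)))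
    -- composing along σ preserves measurability
    have hcompσ : ∀ (F : Λ → Ω → ℝ), (∀ l, Measurable (F l)) →
        Measurable fun ω => F (σ ω) ω := by
      intro F hF s hs
      have hdec : (fun ω => F (σ ω) ω) ⁻¹' s = ⋃ l : Λ, {ω | σ ω = l} ∩ F l ⁻¹' s := by
        ext ω
        simp only [Set.mem_preimage, Set.mem_iUnion, Set.mem_inter_iff, Set.mem_setOf_eq]
        constructor
        · intro h
          exact ⟨σ ω, rfl, h⟩
        · rintro ⟨l, rfl, h⟩
          exact h
      rw [hdec]
      exact MeasurableSet.iUnion fun l => (hσmeas l).inter (hF l hs)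
    -- the lifted map
    set Fd : Ω → WeakDual ℝ E₀ :=
      fun ω => (f (actΛ (σ ω)⁻¹ ω)).comp (ρ (σ ω)).toContinuousLinearMap with hFd
    have hFdmeas : ∀ v : E₀, Measurable fun ω => Fd ω v := by
      intro v
      exact hcompσ (fun l ω => f (actΛ l⁻¹ ω) (ρ l v))
        (fun l => (hfmeas (ρ l v)).comp (hΛmp l⁻¹).measurable)
    -- null sets coming from the assumptions on f
    have hNK : m ({ω | f ω ∉ K} ∩ X) = 0 := by
      have h := hfK
      rw [ae_iff, Measure.restrict_apply' hX] at h
      exact h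
    have hNα : ∀ g : Γ, m ({ω | actΛ (α g ω) (actΓ g ω) ∉ X} ∩ X) = 0 := by
      intro g
      have h := hα g
      rw [ae_iff, Measure.restrict_apply' hX] at h
      exact h
    have hNe : ∀ g : Γ, m ({ω | f (actΛ (α g ω) (actΓ g ω)) ≠
        (f ω).comp (ρ (α g ω)).toContinuousLinearMap} ∩ X) = 0 := by
      intro g
      have h := hfequiv g
      rw [ae_iff, Measure.restrict_apply' hX] at h
      exact h
    set Nall : Set Ω := ({ω | f ω ∉ K} ∩ X) ∪
      ⋃ g : Γ, (({ω | actΛ (α g ω) (actΓ g ω) ∉ X} ∩ X) ∪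
        ({ω | f (actΛ (α g ω) (actΓ g ω)) ≠
          (f ω).comp (ρ (α g ω)).toContinuousLinearMap} ∩ X)) with hNalldef
    have hNall : m Nall = 0 :=
      measure_union_null hNK (measure_iUnion_null fun g =>
        measure_union_null (hNα g) (hNe g))
    -- the good a.e. set
    have h1 : ∀ᵐ ω ∂m, ∃ l, P l ω := by
      rw [ae_iff]
      refine measure_mono_null ?_ hXfull
      intro ω hω
      simp only [Set.mem_setOf_eq, not_exists] at hω
      simp only [Set.mem_compl_iff, Set.mem_iUnion, not_exists]
      intro l hl
      rw [himg, Set.mem_preimage] at hl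
      exact hω l hl
    have h2 : ∀ᵐ ω ∂m, ∀ l l' : Λ, P l ω → P l' ω → l = l' := by
      rw [ae_iff]
      have hsub : {ω | ¬ ∀ l l' : Λ, P l ω → P l' ω → l = l'} ⊆
          ⋃ l : Λ, ⋃ l' : Λ, {ω | l ≠ l' ∧ P l ω ∧ P l' ω} := by
        intro ω hω
        simp only [Set.mem_setOf_eq] at hω
        push_neg at hω
        obtain ⟨l, l', hl, hl', hne⟩ := hω
        simp only [Set.mem_iUnion, Set.mem_setOf_eq]
        exact ⟨l, l', hne, hl, hl'⟩
      refine measure_mono_null hsub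
        (measure_iUnion_null fun l => measure_iUnion_null fun l' => ?_)
      by_cases h : l = l'
      · have : {ω | l ≠ l' ∧ P l ω ∧ P l' ω} = ∅ := by
          ext ω
          simp [h]
        simp [this]
      · refine measure_mono_null ?_ (hXdisj l l' h)
        rintro ω ⟨_, hl, hl'⟩
        rw [Set.mem_inter_iff, himg, himg]
        exact ⟨hl, hl'⟩
    have h3 : ∀ᵐ ω ∂m, actΛ (σ ω)⁻¹ ω ∉ Nall := by
      rw [ae_iff]
      have hsub : {ω | ¬ actΛ (σ ω)⁻¹ ω ∉ Nall} ⊆ ⋃ l : Λ, actΛ l⁻¹ ⁻¹' Nall := by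
        intro ω hω
        simp only [Set.mem_setOf_eq, not_not] at hω
        exact Set.mem_iUnion.mpr ⟨σ ω, hω⟩
      exact measure_mono_null hsub (measure_iUnion_null fun l =>
        (hΛmp l⁻¹).quasiMeasurePreserving.preimage_null hNall)
    have hgood : ∀ᵐ ω ∂m, ((∃ l, P l ω) ∧ (∀ l l' : Λ, P l ω → P l' ω → l = l')) ∧
        actΛ (σ ω)⁻¹ ω ∉ Nall := (h1.and h2).and h3
    -- Fd lands in K a.e.
    have hFdK : ∀ᵐ ω ∂m, Fd ω ∈ K := by
      filter_upwards [hgood] with ω hω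
      obtain ⟨⟨hex, _⟩, hnotin⟩ := hω
      have hx : actΛ (σ ω)⁻¹ ω ∈ X := hσspec ω hex
      have hfk : f (actΛ (σ ω)⁻¹ ω) ∈ K := by
        by_contra hcon
        exact hnotin (Or.inl ⟨hcon, hx⟩)
      exact hKinv (σ ω) _ hfk
    -- Γ-invariance a.e.
    have hFdΓ : ∀ g : Γ, ∀ᵐ ω ∂m, Fd (actΓ g ω) = Fd ω := by
      intro g
      filter_upwards [hgood, hpullΓ g _ hgood] with ω hω hgω
      obtain ⟨⟨hex, _⟩, h3'⟩ := hω
      obtain ⟨⟨hex', huniq'⟩, _⟩ := hgω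
      have hx : actΛ (σ ω)⁻¹ ω ∈ X := hσspec ω hex
      have hxα : actΛ (α g (actΛ (σ ω)⁻¹ ω)) (actΓ g (actΛ (σ ω)⁻¹ ω)) ∈ X := by
        by_contra hcon
        exact h3' (Or.inr (Set.mem_iUnion.mpr ⟨g, Or.inl ⟨hcon, hx⟩⟩))
      have hxe : f (actΛ (α g (actΛ (σ ω)⁻¹ ω)) (actΓ g (actΛ (σ ω)⁻¹ ω))) =
          (f (actΛ (σ ω)⁻¹ ω)).comp (ρ (α g (actΛ (σ ω)⁻¹ ω))).toContinuousLinearMap := by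
        by_contra hcon
        exact h3' (Or.inr (Set.mem_iUnion.mpr ⟨g, Or.inr ⟨hcon, hx⟩⟩))
      set a : Λ := α g (actΛ (σ ω)⁻¹ ω) with ha
      have hkey : actΛ (σ ω * a⁻¹)⁻¹ (actΓ g ω) =
          actΛ a (actΓ g (actΛ (σ ω)⁻¹ ω)) := by
        rw [mul_inv_rev, inv_inv, hΛmul, ← hcomm]
      have hPg : P (σ ω * a⁻¹) (actΓ g ω) := by
        show actΛ (σ ω * a⁻¹)⁻¹ (actΓ g ω) ∈ X
        rw [hkey]
        exact hxα
      have hσg : σ (actΓ g ω) = σ ω * a⁻¹ := huniq' _ _ (hσspec _ hex') hPg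
      show Fd (actΓ g ω) = Fd ω
      simp only [hFd]
      rw [hσg, hkey, hxe]
      refine DFunLike.ext _ _ fun v => ?_
      show f (actΛ (σ ω)⁻¹ ω) (ρ a (ρ (σ ω * a⁻¹) v)) =
        f (actΛ (σ ω)⁻¹ ω) (ρ (σ ω) v)
      rw [← hρmul, inv_mul_cancel_right]
    -- Λ-equivariance a.e.
    have hFdΛ : ∀ l : Λ, ∀ᵐ ω ∂m,
        Fd (actΛ l ω) = (Fd ω).comp (ρ l).toContinuousLinearMap := by
      intro l
      filter_upwards [hgood, hpullΛ l _ hgood] with ω hω hlω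
      obtain ⟨⟨hex, _⟩, _⟩ := hω
      obtain ⟨⟨hex', huniq'⟩, _⟩ := hlω
      have hx : actΛ (σ ω)⁻¹ ω ∈ X := hσspec ω hex
      have hkey : actΛ (l * σ ω)⁻¹ (actΛ l ω) = actΛ (σ ω)⁻¹ ω := by
        rw [mul_inv_rev, hΛmul, hΛinv₁]
      have hPl : P (l * σ ω) (actΛ l ω) := by
        show actΛ (l * σ ω)⁻¹ (actΛ l ω) ∈ X
        rw [hkey]
        exact hx
      have hσl : σ (actΛ l ω) = l * σ ω := huniq' _ _ (hσspec _ hex') hPl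
      show Fd (actΛ l ω) = (Fd ω).comp (ρ l).toContinuousLinearMap
      simp only [hFd]
      rw [hσl, hkey]
      refine DFunLike.ext _ _ fun v => ?_
      show f (actΛ (σ ω)⁻¹ ω) (ρ (l * σ ω) v) =
        f (actΛ (σ ω)⁻¹ ω) (ρ (σ ω) (ρ l v))
      rw [hρmul]
    -- strictification
    obtain ⟨k₀, hk₀⟩ := hKne
    have hAae : ∀ᵐ ω ∂m, (∀ g : Γ, Fd (actΓ g ω) = Fd ω) ∧ Fd ω ∈ K :=
      (ae_all_iff.mpr hFdΓ).and hFdK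
    obtain ⟨N, hNsub, hNmeas, hNnull⟩ := exists_measurable_superset_of_null (ae_iff.mp hAae)
    set W : Set Ω := ⋂ g : Γ, actΓ g ⁻¹' Nᶜ with hW
    have hWmeas : MeasurableSet W :=
      MeasurableSet.iInter fun g => (hΓmp g).measurable hNmeas.compl
    have hWA : ∀ ω ∈ W, (∀ g : Γ, Fd (actΓ g ω) = Fd ω) ∧ Fd ω ∈ K := by
      intro ω hω
      have h1' : ω ∈ Nᶜ := by
        have := Set.mem_iInter.mp hω 1
        rwa [Set.mem_preimage, hΓone] at this
      by_contra hcon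
      exact h1' (hNsub hcon)
    have hWinv : ∀ (g : Γ) ω, ω ∈ W → actΓ g ω ∈ W := by
      intro g ω hω
      refine Set.mem_iInter.mpr fun g' => ?_
      have := Set.mem_iInter.mp hω (g' * g)
      rw [Set.mem_preimage] at this ⊢
      rwa [hΓmul] at this
    have hWconull : m Wᶜ = 0 := by
      rw [hW, Set.compl_iInter]
      refine measure_iUnion_null fun g => ?_
      rw [← Set.preimage_compl, compl_compl]
      exact (hΓmp g).quasiMeasurePreserving.preimage_null hNnull
    set F' : Ω → WeakDual ℝ E₀ := fun ω => if ω ∈ W then Fd ω else k₀ with hF'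
    have hF'K : ∀ ω, F' ω ∈ K := by
      intro ω
      by_cases h : ω ∈ W
      · simp only [hF', if_pos h]
        exact (hWA ω h).2
      · simp only [hF', if_neg h]
        exact hk₀
    have hF'Γ : ∀ (g : Γ) ω, F' (actΓ g ω) = F' ω := by
      intro g ω
      by_cases h : ω ∈ W
      · have h' : actΓ g ω ∈ W := hWinv g ω h
        simp only [hF', if_pos h, if_pos h']
        exact (hWA ω h).1 g
      · have h' : actΓ g ω ∉ W := by
          intro hc
          have := hWinv g⁻¹ _ hc
          rw [← hΓmul, inv_mul_cancel, hΓone] at this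
          exact h this
        simp only [hF', if_neg h, if_neg h']
    have hF'meas : ∀ v : E₀, Measurable fun ω => F' ω v := by
      intro v
      have heq : (fun ω => F' ω v) = fun ω => if ω ∈ W then Fd ω v else k₀ v := by
        funext ω
        by_cases h : ω ∈ W <;> simp [hF', h]
      rw [heq]
      exact Measurable.ite hWmeas (hFdmeas v) measurable_const
    have hWae : ∀ᵐ ω ∂m, ω ∈ W := by
      rw [ae_iff]
      exact hWconull
    have hF'ae : ∀ᵐ ω ∂m, F' ω = Fd ω := by
      filter_upwards [hWae] with ω h
      simp [hF', h]
    have hF'Λ : ∀ l : Λ, ∀ᵐ ω ∂m,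
        F' (actΛ l ω) = (F' ω).comp (ρ l).toContinuousLinearMap := by
      intro l
      filter_upwards [hFdΛ l, hF'ae, hpullΛ l _ hF'ae] with ω hh1 hh2 hh3
      rw [hh3, hh1, ← hh2]
    -- fundamental domain machinery for Γ
    letI : MeasurableSpace Γ := ⊤
    letI : MulAction Γ Ω := { smul := actΓ, one_smul := hΓone, mul_smul := hΓmul }
    haveI : MeasurableSMul Γ Ω :=
      { measurable_const_smul := fun g => (hΓmp g).measurable,
        measurable_smul_const := fun _ => measurable_from_top }
    haveI : SMulInvariantMeasure Γ Ω m :=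
      ⟨fun g s hs => (hΓmp g).measure_preimage hs.nullMeasurableSet⟩
    have hcoverY : ∀ᵐ ω ∂m, ∃ g : Γ, actΓ g ω ∈ Y := by
      rw [ae_iff]
      refine measure_mono_null ?_ hYfull
      intro ω hω
      simp only [Set.mem_setOf_eq, not_exists] at hω
      simp only [Set.mem_compl_iff, Set.mem_iUnion, not_exists]
      intro g hg
      rw [himgΓ, Set.mem_preimage] at hg
      exact hω g⁻¹ hg
    have hYfd : IsFundamentalDomain Γ Y m := by
      refine ⟨hY.nullMeasurableSet, hcoverY, ?_⟩
      intro g g' hgg'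
      have him : ∀ g'' : Γ, (g'' • Y : Set Ω) = actΓ g'' '' Y := fun g'' => rfl
      show m ((g • Y : Set Ω) ∩ (g' • Y : Set Ω)) = 0
      rw [him, him]
      exact hYdisj g g' hgg'
    have hYfd' : ∀ l : Λ, IsFundamentalDomain Γ (actΛ l '' Y) m := by
      intro l
      have hYl : actΛ l '' Y = actΛ l⁻¹ ⁻¹' Y := himg l Y
      refine ⟨?_, ?_, ?_⟩
      · rw [hYl]
        exact ((hΛmp l⁻¹).measurable hY).nullMeasurableSet
      · rw [ae_iff]
        have hsub : {ω | ¬ ∃ g : Γ, g • ω ∈ actΛ l '' Y} ⊆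
            actΛ l⁻¹ ⁻¹' {ω | ¬ ∃ g : Γ, actΓ g ω ∈ Y} := by
          intro ω hω
          simp only [Set.mem_setOf_eq, not_exists] at hω
          simp only [Set.mem_preimage, Set.mem_setOf_eq, not_exists]
          intro g hg
          refine hω g ?_
          rw [hYl, Set.mem_preimage]
          show actΛ l⁻¹ (actΓ g ω) ∈ Y
          rw [← hcomm]
          exact hg
        exact measure_mono_null hsub
          ((hΛmp l⁻¹).quasiMeasurePreserving.preimage_null (ae_iff.mp hcoverY))
      · intro g g' hgg'
        have him : ∀ g'' : Γ, (g'' • (actΛ l '' Y) : Set Ω) =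
            actΛ l⁻¹ ⁻¹' (actΓ g'' '' Y) := by
          intro g''
          show actΓ g'' '' (actΛ l '' Y) = actΛ l⁻¹ ⁻¹' (actΓ g'' '' Y)
          rw [Set.image_image, ← himg]
          have hfun : (fun y => actΓ g'' (actΛ l y)) = fun y => actΛ l (actΓ g'' y) :=
            funext fun y => hcomm g'' l y
          rw [hfun, ← Set.image_image]
        show m ((g • (actΛ l '' Y) : Set Ω) ∩ (g' • (actΛ l '' Y) : Set Ω)) = 0
        rw [him, him, ← Set.preimage_inter]
        exact (hΛmp l⁻¹).quasiMeasurePreserving.preimage_null (hYdisj g g' hgg')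
    -- the probability measure on Y
    have hY0 : m Y ≠ 0 := by
      intro h0
      have hcov : m (⋃ g : Γ, actΓ g '' Y) = 0 := by
        refine measure_iUnion_null fun g => ?_
        rw [himgΓ]
        exact (hΓmp g⁻¹).quasiMeasurePreserving.preimage_null h0
      have hXle : m X ≤ m (⋃ g : Γ, actΓ g '' Y) + m ((⋃ g : Γ, actΓ g '' Y)ᶜ) :=
        (measure_mono (by rw [Set.union_compl_self]; exact Set.subset_univ X)).trans
          (measure_union_le _ _)
      rw [hcov, hYfull, add_zero] at hXle
      exact hXpos.ne' (le_antisymm hXle zero_le)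
    set μY : Measure Ω := (m Y)⁻¹ • m.restrict Y with hμY
    haveI : IsProbabilityMeasure μY := by
      constructor
      rw [hμY, Measure.smul_apply, Measure.restrict_apply_univ, smul_eq_mul,
        ENNReal.inv_mul_cancel hY0 hYfin.ne]
    -- boundedness and integrability
    have hbound : ∀ v : E₀, ∃ C : ℝ, ∀ φ ∈ K, ‖φ v‖ ≤ C := by
      intro v
      obtain ⟨C, hC⟩ := isBounded_iff_forall_norm_le.mp
        (hKcomp.image (WeakDual.eval_continuous v)).isBounded
      exact ⟨C, fun φ hφ => hC _ ⟨φ, hφ, rfl⟩⟩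
    -- invariance of the weak integral
    have hemb : ∀ l : Λ, MeasurableEmbedding (actΛ l) := by
      intro l
      exact (MeasurableEquiv.mk ⟨actΛ l, actΛ l⁻¹, fun ω => hΛinv₁ l ω, fun ω => hΛinv₂ l ω⟩
        (hΛmp l).measurable (hΛmp l⁻¹).measurable).measurableEmbedding
    have hIinv : ∀ (l : Λ) (v : E₀),
        (∫ ω, F' ω (ρ l v) ∂μY) = ∫ ω, F' ω v ∂μY := by
      intro l v
      rw [hμY, integral_smul_measure, integral_smul_measure]
      congr 1
      calc ∫ ω in Y, F' ω (ρ l v) ∂m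
          = ∫ ω in Y, F' (actΛ l ω) v ∂m := by
            refine integral_congr_ae (ae_restrict_of_ae ((hF'Λ l).mono fun ω h => ?_))
            show (F' ω) (ρ l v) = (F' (actΛ l ω)) v
            rw [h]
            rfl
        _ = ∫ ω in actΛ l '' Y, F' ω v ∂m :=
            ((hΛmp l).setIntegral_image_emb (hemb l) (fun ω => F' ω v) Y).symm
        _ = ∫ ω in Y, F' ω v ∂m :=
            (hYfd' l).setIntegral_eq hYfd (fun g x => by
              show (F' (actΓ g x)) v = (F' x) v
              rw [hF'Γ g x])
    -- finite-dimensional barycenters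
    have hfin : ∀ t : Finset E₀, ∃ φ ∈ K, ∀ v ∈ t, φ v = ∫ ω, F' ω v ∂μY := by
      intro t
      set π : WeakDual ℝ E₀ →ₗ[ℝ] (t → ℝ) :=
        { toFun := fun φ i => φ (i : E₀),
          map_add' := fun φ ψ => rfl,
          map_smul' := fun c φ => rfl } with hπ
      have hπcont : Continuous fun φ : WeakDual ℝ E₀ => (fun i : t => φ (i : E₀)) :=
        continuous_pi fun i => WeakDual.eval_continuous _
      set s : Set (t → ℝ) := (fun φ : WeakDual ℝ E₀ => fun i : t => φ (i : E₀)) '' K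
        with hs
      have hsconv : Convex ℝ s := hKconv.linear_image π
      have hscomp : IsCompact s := hKcomp.image hπcont
      set G : Ω → (t → ℝ) := fun ω i => F' ω (i : E₀) with hG
      have hGmem : ∀ ω, G ω ∈ s := fun ω => ⟨F' ω, hF'K ω, rfl⟩
      have hGmeas : Measurable G := measurable_pi_lambda _ fun i => hF'meas (i : E₀)
      choose C hC using fun i : t => hbound (i : E₀)
      have hGint : Integrable G μY := by
        refine (integrable_const (∑ i : t, |C i| + 1)).mono'
          hGmeas.aestronglyMeasurable (ae_of_all _ fun ω => ?_)
        have hnn : (0 : ℝ) ≤ ∑ i : t, |C i| + 1 := by positivity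
        rw [pi_norm_le_iff_of_nonneg hnn]
        intro i
        calc ‖G ω i‖ ≤ C i := hC i _ (hF'K ω)
          _ ≤ |C i| := le_abs_self _
          _ ≤ ∑ j : t, |C j| :=
              Finset.single_le_sum (fun j _ => abs_nonneg (C j)) (Finset.mem_univ i)
          _ ≤ ∑ j : t, |C j| + 1 := by linarith
      have hmem : (∫ ω, G ω ∂μY) ∈ s :=
        hsconv.integral_mem hscomp.isClosed (ae_of_all _ hGmem) hGint
      obtain ⟨φ, hφK, hφeq⟩ := hmem
      refine ⟨φ, hφK, fun v hv => ?_⟩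
      have hcomp : (∫ ω, G ω ∂μY) ⟨v, hv⟩ = ∫ ω, F' ω v ∂μY := by
        have hpr := (ContinuousLinearMap.proj (R := ℝ) (φ := fun _ : t => ℝ)
          (⟨v, hv⟩ : t)).integral_comp_comm hGint
        simpa using hpr.symm
      have := congrFun hφeq (⟨v, hv⟩ : t)
      rw [← hcomp]
      exact this
    -- finite intersection property
    set S : Finset E₀ → Set (WeakDual ℝ E₀) :=
      fun t => {φ | φ ∈ K ∧ ∀ v ∈ t, φ v = ∫ ω, F' ω v ∂μY} with hS
    have hScl : ∀ t, IsClosed (S t) := by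
      intro t
      have heq : S t = K ∩ ⋂ v ∈ t, {φ : WeakDual ℝ E₀ | φ v = ∫ ω, F' ω v ∂μY} := by
        ext φ
        simp [hS]
      rw [heq]
      exact hKcomp.isClosed.inter (isClosed_biInter fun v _ =>
        isClosed_eq (WeakDual.eval_continuous v) continuous_const)
    have hScomp : ∀ t, IsCompact (S t) := fun t =>
      hKcomp.of_isClosed_subset (hScl t) (fun φ hφ => hφ.1)
    have hSne : ∀ t, (S t).Nonempty := by
      intro t
      obtain ⟨φ, hφK, hφ⟩ := hfin t
      exact ⟨φ, hφK, hφ⟩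
    have hSdir : Directed (· ⊇ ·) S := by
      intro t₁ t₂
      refine ⟨t₁ ∪ t₂, fun φ hφ => ⟨hφ.1, fun v hv => hφ.2 v ?_⟩,
        fun φ hφ => ⟨hφ.1, fun v hv => hφ.2 v ?_⟩⟩
      · exact Finset.mem_union_left _ hv
      · exact Finset.mem_union_right _ hv
    obtain ⟨k, hk⟩ := IsCompact.nonempty_iInter_of_directed_nonempty_isCompact_isClosed
      S hSdir hSne hScomp hScl
    have hkS : ∀ t, k ∈ S t := fun t => Set.mem_iInter.mp hk t
    refine ⟨k, (hkS ∅).1, fun l => ?_⟩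
    refine DFunLike.ext _ _ fun v => ?_
    have hkv : k v = ∫ ω, F' ω v ∂μY := (hkS {v}).2 v (Finset.mem_singleton_self v)
    have hklv : k (ρ l v) = ∫ ω, F' ω (ρ l v) ∂μY :=
      (hkS {ρ l v}).2 _ (Finset.mem_singleton_self _)
    show k (ρ l v) = k v
    rw [hkv, hklv, hIinv l v]
  · -- easy direction
    rintro ⟨k, hkK, hkfix⟩
    exact ⟨fun _ => k, fun v => measurable_const, ae_of_all _ fun _ => hkK,
      fun g => ae_of_all _ fun ω => (hkfix (α g ω)).symm⟩
end

section
/- Let $\Gamma$ and $\Lambda$ be countable groups and $\alpha: \Gamma \times X \to \Lambda$ a measurable cocycle for a probability measure-preserving action $\Gamma \curvearrowright (X, \mu)$. Say $\alpha$ is proper if for every $\varepsilon > 0$ and every finite $F \subset \Lambda$ there is a finite $F' \subset \Gamma$ with $\mu(\{x : \alpha(\gamma, \gamma^{-1}x) \in F\}) < \varepsilon$ for all $\gamma \in \Gamma \setminus F'$. Then the Zimmer cocycle associated to a measure equivalence coupling of $\Gamma$ and $\Lambda$ is proper. -/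
/-!
Because `X` meets its nontrivial `Λ`-translates only in null sets, the cocycle satisfies
`α(γ, γ⁻¹·x) = α(γ⁻¹, x)⁻¹` for almost every `x ∈ X`; hence `α(γ, γ⁻¹·x) = l` forces
`x ∈ X ∩ γ l X`, and properness reduces to `m(A ∩ γ B) → 0` as `γ → ∞`, for `A`, `B` of finite
measure. This mixing holds because `Γ` has a fundamental domain `Y`: up to small error `A` and `B`
lie in finitely many translates `g Y`, and for `γ` outside a finite set `γ` moves the translates
covering `B` off those covering `A`.
-/

open MeasureTheory Filter Set Topology Function
open scoped ENNReal Pointwise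

namespace MeasureTheory.IsFundamentalDomain

variable {G α : Type*} [Group G] [MulAction G α] [MeasurableSpace α] {μ : Measure α} {s : Set α}

theorem measure_biUnion_smul_inter_smul_biUnion_smul (h : IsFundamentalDomain G s μ)
    {S T : Finset G} {γ : G} (hγ : ∀ t ∈ T, γ * t ∉ S) :
    μ ((⋃ g ∈ S, g • s) ∩ γ • ⋃ t ∈ T, t • s) = 0 := by
  simp only [smul_set_iUnion, smul_smul, iUnion_inter, inter_iUnion]
  refine (measure_biUnion_null_iff (μ := μ) T.countable_toSet).2 fun t ht => ?_
  refine (measure_biUnion_null_iff (μ := μ) S.countable_toSet).2 fun g hg => ?_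
  exact h.aedisjoint fun hgt => hγ t ht (hgt ▸ hg)

variable [Countable G] [MeasurableConstSMul G α] [SMulInvariantMeasure G α μ]

theorem tendsto_measure_diff_biUnion_smul (h : IsFundamentalDomain G s μ) {A : Set α}
    (hA : NullMeasurableSet A μ) (hA_fin : μ A ≠ ∞) :
    Tendsto (fun S : Finset G => μ (A \ ⋃ g ∈ S, g • s)) atTop (𝓝 0) := by
  have hnull : μ (⋂ S : Finset G, A \ ⋃ g ∈ S, g • s) = 0 := by
    refine measure_mono_null (fun x hx => ?_) (eventuallyEq_univ.1 h.iUnion_smul_ae_eq)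
    intro hx'
    obtain ⟨g, hg⟩ := mem_iUnion.1 hx'
    exact (mem_iInter.1 hx {g}).2 (mem_biUnion (Finset.mem_singleton_self g) hg)
  rw [← hnull]
  refine tendsto_measure_iInter_atTop (fun S => hA.diff ?_) ?_ ⟨∅, by simpa using hA_fin⟩
  · exact .biUnion S.countable_toSet fun g _ => h.nullMeasurableSet_smul g
  · exact fun S T hST => sdiff_subset_sdiff_right (biUnion_subset_biUnion_left hST)

theorem tendsto_measure_inter_smul (h : IsFundamentalDomain G s μ) {A B : Set α}
    (hA : NullMeasurableSet A μ) (hB : NullMeasurableSet B μ) (hA_fin : μ A ≠ ∞)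
    (hB_fin : μ B ≠ ∞) : Tendsto (fun γ : G => μ (A ∩ γ • B)) cofinite (𝓝 0) := by
  classical
  refine ENNReal.tendsto_nhds_zero.2 fun ε hε => ?_
  have hε2 : 0 < ε / 2 := ENNReal.half_pos hε.ne'
  obtain ⟨S, hS⟩ := ((h.tendsto_measure_diff_biUnion_smul hA hA_fin).eventually
    (eventually_le_nhds hε2)).exists
  obtain ⟨T, hT⟩ := ((h.tendsto_measure_diff_biUnion_smul hB hB_fin).eventually
    (eventually_le_nhds hε2)).exists
  filter_upwards [(S * T⁻¹).eventually_cofinite_notMem] with γ hγ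
  have hγT : ∀ t ∈ T, γ * t ∉ S := fun t ht hγt =>
    hγ (by simpa using Finset.mul_mem_mul hγt (Finset.inv_mem_inv ht))
  set US := ⋃ g ∈ S, g • s
  set UT := ⋃ t ∈ T, t • s
  have hcover : A ∩ γ • B ⊆ (A \ US) ∪ γ • (B \ UT) ∪ (US ∩ γ • UT) := by
    rw [smul_set_sdiff]
    intro x hx
    by_cases x ∈ US <;> by_cases x ∈ γ • UT <;> simp_all
  calc μ (A ∩ γ • B) ≤ μ (A \ US ∪ γ • (B \ UT)) + μ (US ∩ γ • UT) :=
        (measure_mono hcover).trans (measure_union_le _ _)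
    _ ≤ μ (A \ US) + μ (γ • (B \ UT)) + μ (US ∩ γ • UT) := by grw [measure_union_le]
    _ ≤ ε / 2 + ε / 2 + 0 := by
        rw [measure_smul, h.measure_biUnion_smul_inter_smul_biUnion_smul hγT]
        gcongr
    _ = ε := by rw [add_zero, ENNReal.add_halves]

end MeasureTheory.IsFundamentalDomain

section CocycleOnWanderingSet

variable {Γ Λ Ω : Type*} [Group Γ] [Group Λ] [Countable Λ] [MulAction Γ Ω] [MulAction Λ Ω]
  [MeasurableSpace Ω] {μ : Measure Ω} {X : Set Ω} {α : Γ → Ω → Λ}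

theorem ae_smul_mem_imp_eq_one (hX : Pairwise (AEDisjoint μ on fun l : Λ => l • X)) :
    ∀ᵐ x ∂μ, ∀ l : Λ, x ∈ X → l • x ∈ X → l = 1 := by
  refine ae_all_iff.2 fun l => ?_
  by_cases hl : l = 1
  · exact .of_forall fun _ _ _ => hl
  have hdisj : μ ((1 : Λ) • X ∩ l⁻¹ • X) = 0 := hX (by simpa [eq_comm] using hl)
  refine (measure_eq_zero_iff_ae_notMem.1 hdisj).mono fun x hx hxX hlx => absurd ?_ hx
  rw [one_smul, mem_inter_iff, mem_smul_set_iff_inv_smul_mem, inv_inv]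
  exact ⟨hxX, hlx⟩

theorem tendsto_cocycle_smul_ae [SMulInvariantMeasure Γ Ω μ] [SMulInvariantMeasure Λ Ω μ]
    (g : Γ) : Tendsto (fun x => α g x • g • x) (ae μ) (ae μ) := fun _ hN =>
  measure_mono_null (fun x hx => mem_iUnion.2 ⟨α g x, hx⟩)
    (measure_iUnion_null fun l => measure_preimage_smul_null (measure_preimage_smul_null hN l) g)

variable [SMulCommClass Γ Λ Ω] [SMulInvariantMeasure Γ Ω μ] [SMulInvariantMeasure Λ Ω μ]

theorem ae_restrict_cocycle_inv (hXm : MeasurableSet X)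
    (hX : Pairwise (AEDisjoint μ on fun l : Λ => l • X))
    (hα : ∀ g : Γ, ∀ᵐ x ∂μ.restrict X, α g x • g • x ∈ X) (γ : Γ) :
    ∀ᵐ x ∂μ.restrict X,
      α γ⁻¹ x • γ⁻¹ • x ∈ X ∧ α γ (α γ⁻¹ x • γ⁻¹ • x) = (α γ⁻¹ x)⁻¹ := by
  have hback : ∀ᵐ x ∂μ, α γ⁻¹ x • γ⁻¹ • x ∈ X →
      α γ (α γ⁻¹ x • γ⁻¹ • x) • γ • α γ⁻¹ x • γ⁻¹ • x ∈ X :=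
    tendsto_cocycle_smul_ae γ⁻¹ ((ae_restrict_iff' hXm).1 (hα γ))
  filter_upwards [hα γ⁻¹, ae_restrict_of_ae hback, ae_restrict_of_ae (ae_smul_mem_imp_eq_one hX),
    ae_restrict_mem hXm] with x hy hγy hwander hx
  refine ⟨hy, eq_inv_of_mul_eq_one_left (hwander _ hx ?_)⟩
  have hγ_back : γ • α γ⁻¹ x • γ⁻¹ • x = α γ⁻¹ x • x := by rw [smul_comm, smul_inv_smul]
  rw [mul_smul, ← hγ_back]
  exact hγy hy

theorem measure_inter_cocycle_mem_le (hXm : MeasurableSet X)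
    (hX : Pairwise (AEDisjoint μ on fun l : Λ => l • X))
    (hα : ∀ g : Γ, ∀ᵐ x ∂μ.restrict X, α g x • g • x ∈ X) (γ : Γ) (F : Finset Λ) :
    μ (X ∩ {x | α γ (α γ⁻¹ x • γ⁻¹ • x) ∈ F}) ≤ ∑ l ∈ F, μ (X ∩ γ • l • X) := by
  refine (measure_mono_ae ?_).trans (measure_biUnion_finset_le F _)
  filter_upwards [(ae_restrict_iff' hXm).1 (ae_restrict_cocycle_inv hXm hX hα γ)]
    with x hx ⟨hxX, hxF⟩
  obtain ⟨hy, hinv⟩ := hx hxX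
  refine mem_biUnion (x := α γ (α γ⁻¹ x • γ⁻¹ • x)) hxF ⟨hxX, ?_⟩
  rwa [mem_smul_set_iff_inv_smul_mem, mem_smul_set_iff_inv_smul_mem, hinv, inv_inv]

end CocycleOnWanderingSet

theorem stmt_11_general {Γ Λ Ω : Type*} [Group Γ] [Countable Γ] [Group Λ] [Countable Λ]
    [MeasurableSpace Ω]
    (m : Measure Ω)
    (actΓ : Γ → Ω → Ω) (actΛ : Λ → Ω → Ω)
    (hΓone : ∀ ω, actΓ 1 ω = ω) (hΓmul : ∀ g h ω, actΓ (g * h) ω = actΓ g (actΓ h ω))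
    (hΛone : ∀ ω, actΛ 1 ω = ω) (hΛmul : ∀ g h ω, actΛ (g * h) ω = actΛ g (actΛ h ω))
    (hΓmp : ∀ g, MeasurePreserving (actΓ g) m m)
    (hΛmp : ∀ l, MeasurePreserving (actΛ l) m m)
    (hcomm : ∀ g l ω, actΓ g (actΛ l ω) = actΛ l (actΓ g ω))
    -- `X` is a finite-measure fundamental domain for `Λ`
    (X : Set Ω) (hX : MeasurableSet X) (hXfin : m X < ⊤) (hXpos : 0 < m X)
    (hXdisj : ∀ l l' : Λ, l ≠ l' → m (actΛ l '' X ∩ actΛ l' '' X) = 0)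
    -- `Y` is a finite-measure fundamental domain for `Γ`
    (Y : Set Ω) (hY : MeasurableSet Y)
    (hYdisj : ∀ g g' : Γ, g ≠ g' → m (actΓ g '' Y ∩ actΓ g' '' Y) = 0)
    (hYfull : m ((⋃ g : Γ, actΓ g '' Y)ᶜ) = 0)
    -- the Zimmer cocycle: `α(g, ω)` brings `actΓ g ω` back into `X`
    (α : Γ → Ω → Λ)
    (hα : ∀ g : Γ, ∀ᵐ ω ∂(m.restrict X), actΛ (α g ω) (actΓ g ω) ∈ X) :
    ∀ ε : ℝ, 0 < ε → ∀ F : Finset Λ, ∃ F' : Finset Γ, ∀ γ : Γ, γ ∉ F' →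
      m (X ∩ {x | α γ (actΛ (α γ⁻¹ x) (actΓ γ⁻¹ x)) ∈ F}) < ENNReal.ofReal ε * m X := by
  intro ε hε F
  let _ : MulAction Γ Ω := { smul := actΓ, one_smul := hΓone, mul_smul := hΓmul }
  let _ : MulAction Λ Ω := { smul := actΛ, one_smul := hΛone, mul_smul := hΛmul }
  have _ : SMulCommClass Γ Λ Ω := ⟨hcomm⟩
  have _ : MeasurableConstSMul Γ Ω := ⟨fun g => (hΓmp g).measurable⟩
  have _ : MeasurableConstSMul Λ Ω := ⟨fun l => (hΛmp l).measurable⟩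
  have _ : SMulInvariantMeasure Γ Ω m :=
    ⟨fun g _ hs => (hΓmp g).measure_preimage hs.nullMeasurableSet⟩
  have _ : SMulInvariantMeasure Λ Ω m :=
    ⟨fun l _ hs => (hΛmp l).measure_preimage hs.nullMeasurableSet⟩
  have hYfd : IsFundamentalDomain Γ Y m :=
    { nullMeasurableSet := hY.nullMeasurableSet
      aedisjoint := fun g g' h => hYdisj g g' h
      ae_covers := (measure_eq_zero_iff_ae_notMem.1 hYfull).mono fun x hx => by
        obtain ⟨g, hg⟩ := mem_iUnion.1 (not_not.1 hx)
        exact ⟨g⁻¹, mem_smul_set_iff_inv_smul_mem.1 hg⟩ }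
  have hmix : Tendsto (fun γ : Γ => ∑ l ∈ F, m (X ∩ γ • l • X)) cofinite (𝓝 0) := by
    simpa using tendsto_finsetSum F fun l _ => hYfd.tendsto_measure_inter_smul
      hX.nullMeasurableSet (hX.nullMeasurableSet.smul l) hXfin.ne
      ((measure_smul m l X).trans_ne hXfin.ne)
  have hsmall :=
    hmix.eventually_lt_const (ENNReal.mul_pos (ENNReal.ofReal_pos.2 hε).ne' hXpos.ne')
  refine ⟨(eventually_cofinite.1 hsmall).toFinset, fun γ hγ => ?_⟩
  refine (measure_inter_cocycle_mem_le hX (fun l l' h => hXdisj l l' h) hα γ F).trans_lt ?_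
  simpa using hγ

/-- The Zimmer cocycle associated to a measure equivalence coupling is proper: for every
`ε > 0` and finite `F ⊆ Λ` there is a finite `F' ⊆ Γ` such that for all `γ ∉ F'`, the
(normalized) measure of `{x ∈ X : α(γ, γ⁻¹·x) ∈ F}` is less than `ε`, where `γ⁻¹·x`
denotes the induced `Γ`-action on `X ≅ Ω/Λ`. -/
theorem stmt_11 {Γ Λ Ω : Type*} [Group Γ] [Countable Γ] [Group Λ] [Countable Λ]
    [MeasurableSpace Ω]
    (m : Measure Ω) [SigmaFinite m]
    (actΓ : Γ → Ω → Ω) (actΛ : Λ → Ω → Ω)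
    (hΓone : ∀ ω, actΓ 1 ω = ω) (hΓmul : ∀ g h ω, actΓ (g * h) ω = actΓ g (actΓ h ω))
    (hΛone : ∀ ω, actΛ 1 ω = ω) (hΛmul : ∀ g h ω, actΛ (g * h) ω = actΛ g (actΛ h ω))
    (hΓmp : ∀ g, MeasurePreserving (actΓ g) m m)
    (hΛmp : ∀ l, MeasurePreserving (actΛ l) m m)
    (hcomm : ∀ g l ω, actΓ g (actΛ l ω) = actΛ l (actΓ g ω))
    -- `X` is a finite-measure fundamental domain for `Λ`
    (X : Set Ω) (hX : MeasurableSet X) (hXfin : m X < ⊤) (hXpos : 0 < m X)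
    (hXdisj : ∀ l l' : Λ, l ≠ l' → m (actΛ l '' X ∩ actΛ l' '' X) = 0)
    (hXfull : m ((⋃ l : Λ, actΛ l '' X)ᶜ) = 0)
    -- `Y` is a finite-measure fundamental domain for `Γ`
    (Y : Set Ω) (hY : MeasurableSet Y) (hYfin : m Y < ⊤)
    (hYdisj : ∀ g g' : Γ, g ≠ g' → m (actΓ g '' Y ∩ actΓ g' '' Y) = 0)
    (hYfull : m ((⋃ g : Γ, actΓ g '' Y)ᶜ) = 0)
    -- the Zimmer cocycle: `α(g, ω)` brings `actΓ g ω` back into `X`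
    (α : Γ → Ω → Λ)
    (hα : ∀ g : Γ, ∀ᵐ ω ∂(m.restrict X), actΛ (α g ω) (actΓ g ω) ∈ X)
    (hαmeas : ∀ (g : Γ) (l : Λ), MeasurableSet {ω | α g ω = l}) :
    ∀ ε : ℝ, 0 < ε → ∀ F : Finset Λ, ∃ F' : Finset Γ, ∀ γ : Γ, γ ∉ F' →
      m (X ∩ {x | α γ (actΛ (α γ⁻¹ x) (actΓ γ⁻¹ x)) ∈ F}) < ENNReal.ofReal ε * m X :=
  stmt_11_general m actΓ actΛ hΓone hΓmul hΛone hΛmul hΓmp hΛmp hcomm X hX hXfin hXpos hXdisj Y hY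
    hYdisj hYfull α hα
end

section
/- Let $E$ be the dual of a separable Banach space, $K \subset E$ a weak*-closed convex subset, and $(X, \mu)$ a probability space. Under the isometric isomorphism $L^\infty_{w^*}(X, \mu; E) \cong \mathcal{B}(L^1(X, \mu), E)$ given by $f \mapsto (g \mapsto \int g(x) f(x)\, d\mu(x))$ (weak*-valued integral), a function $f \in L^\infty_{w^*}(X, \mu; E)$ has essential range in $K$ if and only if the corresponding operator $\Xi$ satisfies $\Xi(g) \in K$ for every $g \in L^1(X, \mu)$ with $g \geq 0$ and $\|g\|_1 = 1$. -/
/-!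
If `f` lies a.e. in `K`, a barycenter `ξ` of `f` against a probability density `g` lies in `K`:
otherwise Hahn–Banach separates `ξ` from `K` by a weak*-continuous functional, i.e. an
evaluation at some `v`, and integrating `f · v < u` against `g` contradicts `u < ξ v`.

Conversely, intersect `K` with the dual ball `B` of radius `C`. For `v` in a countable dense set
`D` and rational `q` with `k v < q` on `K ∩ B`, testing against the normalized indicator of
`{q ≤ f · v}` shows that `f · v < q` a.e. Countably many null sets are discarded, and a point of
`B` satisfying all these conditions lies in `K ∩ B`: on the bounded set `B` evaluations are
uniformly Lipschitz, so a separating evaluation at any `v` may be replaced by one at a point of `D`.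
-/

open MeasureTheory Filter Metric

namespace WeakDual

section Separation

variable {E : Type*} [AddCommGroup E] [TopologicalSpace E] [Module ℝ E]

instance : LocallyConvexSpace ℝ (WeakDual ℝ E) := WeakBilin.locallyConvexSpace

theorem exists_eval_lt_of_notMem {K : Set (WeakDual ℝ E)} (hK : IsClosed K)
    (hKconv : Convex ℝ K) {ξ : WeakDual ℝ E} (hξ : ξ ∉ K) :
    ∃ v : E, ∃ u : ℝ, (∀ k ∈ K, k v < u) ∧ u < ξ v := by
  obtain ⟨φ, u, hφK, hφξ⟩ := geometric_hahn_banach_closed_point hKconv hK hξ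
  obtain ⟨v, rfl⟩ := (topDualPairing ℝ E).dualEmbedding_surjective φ
  exact ⟨v, u, hφK, hφξ⟩

end Separation

variable {E : Type*} [NormedAddCommGroup E] [NormedSpace ℝ E]

theorem abs_sub_le_of_norm_le {k : WeakDual ℝ E} {C : ℝ} (hk : ‖toStrongDual k‖ ≤ C)
    (v w : E) : |k v - k w| ≤ C * ‖v - w‖ := by
  rw [← map_sub]
  exact ((toStrongDual k).le_opNorm _).trans (by gcongr)

theorem mem_of_forall_eval_lt_imp_eval_lt {K : Set (WeakDual ℝ E)} (hK : IsClosed K)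
    (hKconv : Convex ℝ K) {C : ℝ} (hKC : ∀ k ∈ K, ‖toStrongDual k‖ ≤ C) {D : Set E}
    (hD : Dense D) {ξ : WeakDual ℝ E} (hξC : ‖toStrongDual ξ‖ ≤ C)
    (h : ∀ v ∈ D, ∀ q : ℚ, (∀ k ∈ K, k v < q) → ξ v < q) : ξ ∈ K := by
  by_contra hξ
  obtain ⟨w, u, hKw, hξw⟩ := exists_eval_lt_of_notMem hK hKconv hξ
  set ε := (ξ w - u) / 3 with hε
  obtain ⟨q, huq, hqξ⟩ := exists_rat_btwn (show u + ε < ξ w - ε by linarith)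
  obtain ⟨v, hvD, hvε⟩ : ∃ v ∈ D, v ∈ {v : E | C * ‖v - w‖ < ε} :=
    hD.exists_mem_open (isOpen_lt (by fun_prop) continuous_const)
      ⟨w, show C * ‖w - w‖ < ε by rw [sub_self, norm_zero, mul_zero]; linarith⟩
  have hKv : ∀ k ∈ K, k v < q := fun k hk => by
    linarith [(abs_le.1 (abs_sub_le_of_norm_le (hKC k hk) v w)).2, hKw k hk, hvε.out]
  linarith [h v hvD q hKv, (abs_le.1 (abs_sub_le_of_norm_le hξC v w)).1, hvε.out]

end WeakDual

open WeakDual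

section Barycenter

variable {X : Type*} [MeasurableSpace X] {μ : Measure X}

theorem ae_lt_of_forall_integral_mul_lt [IsFiniteMeasure μ] {h : X → ℝ} (hmeas : Measurable h)
    (hint : Integrable h μ) {q : ℝ}
    (H : ∀ g : X → ℝ, Measurable g → Integrable g μ → (∀ᵐ x ∂μ, 0 ≤ g x) →
      ∫ x, g x ∂μ = 1 → ∫ x, g x * h x ∂μ < q) :
    ∀ᵐ x ∂μ, h x < q := by
  set A := {x | q ≤ h x}
  have hA : MeasurableSet A := measurableSet_le measurable_const hmeas
  by_contra hneg
  have hμA : μ A ≠ 0 := by simpa [ae_iff, A] using hneg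
  have hμA' : μ.real A ≠ 0 := (measureReal_ne_zero_iff).2 hμA
  set g := A.indicator fun _ => (μ.real A)⁻¹
  have hg1 : ∫ x, g x ∂μ = 1 := by
    rw [integral_indicator_const _ hA, smul_eq_mul, mul_inv_cancel₀ hμA']
  have hgh : ∫ x, g x * h x ∂μ = ⨍ x in A, h x ∂μ := by
    simp_rw [g, ← Set.indicator_mul_left]
    rw [integral_indicator hA, integral_const_mul, setAverage_eq, smul_eq_mul]
  have hq : q ≤ ⨍ x in A, h x ∂μ :=
    (convex_Ici q).set_average_mem isClosed_Ici hμA (measure_ne_top μ A)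
      ((ae_restrict_iff' hA).2 (ae_of_all _ fun x hx => hx)) hint.integrableOn
  have := H g (measurable_const.indicator hA) ((integrable_const _).indicator hA)
    (ae_of_all _ fun x => Set.indicator_nonneg (fun _ _ => by positivity) x) hg1
  linarith

variable {E : Type*} [NormedAddCommGroup E] [NormedSpace ℝ E] {f : X → WeakDual ℝ E}
  {C : ℝ} {g : X → ℝ}

theorem integrable_mul_eval (hf : ∀ v, Measurable fun x => f x v)
    (hfC : ∀ᵐ x ∂μ, ‖toStrongDual (f x)‖ ≤ C) (hg : Integrable g μ) (v : E) :
    Integrable (fun x => g x * f x v) μ := by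
  refine (hg.bdd_mul (hf v).aestronglyMeasurable (c := C * ‖v‖) ?_).congr
    (ae_of_all _ fun x => mul_comm _ _)
  filter_upwards [hfC] with x hx
  exact ((toStrongDual (f x)).le_opNorm v).trans (by gcongr)

theorem exists_forall_eval_eq_integral_mul (hf : ∀ v, Measurable fun x => f x v)
    (hfC : ∀ᵐ x ∂μ, ‖toStrongDual (f x)‖ ≤ C) (hg : Integrable g μ) :
    ∃ ξ : WeakDual ℝ E, ∀ v, ξ v = ∫ x, g x * f x v ∂μ := by
  have hint := integrable_mul_eval hf hfC hg
  let ξ : E →ₗ[ℝ] ℝ :=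
    { toFun v := ∫ x, g x * f x v ∂μ
      map_add' v w := by simp only [map_add, mul_add, integral_add (hint v) (hint w)]
      map_smul' c v := by simp only [map_smul, smul_eq_mul, mul_left_comm, integral_const_mul,
        RingHom.id_apply] }
  refine ⟨StrongDual.toWeakDual (ξ.mkContinuous (C * ∫ x, ‖g x‖ ∂μ) fun v => ?_),
    fun v => rfl⟩
  calc ‖ξ v‖ ≤ ∫ x, ‖g x‖ * (C * ‖v‖) ∂μ := by
        refine norm_integral_le_of_norm_le (hg.norm.mul_const _) ?_
        filter_upwards [hfC] with x hx
        rw [norm_mul]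
        exact mul_le_mul_of_nonneg_left (((toStrongDual (f x)).le_opNorm v).trans (by gcongr))
          (norm_nonneg _)
    _ = C * (∫ x, ‖g x‖ ∂μ) * ‖v‖ := by rw [integral_mul_const]; ring

theorem mem_of_forall_eval_eq_integral_mul {K : Set (WeakDual ℝ E)} (hK : IsClosed K)
    (hKconv : Convex ℝ K) (hf : ∀ v, Measurable fun x => f x v)
    (hfC : ∀ᵐ x ∂μ, ‖toStrongDual (f x)‖ ≤ C)
    (hfK : ∀ᵐ x ∂μ, f x ∈ K) (hg : Integrable g μ) (hg0 : ∀ᵐ x ∂μ, 0 ≤ g x)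
    (hg1 : ∫ x, g x ∂μ = 1) {ξ : WeakDual ℝ E} (hξ : ∀ v, ξ v = ∫ x, g x * f x v ∂μ) :
    ξ ∈ K := by
  by_contra hξK
  obtain ⟨v, u, hKv, hξv⟩ := exists_eval_lt_of_notMem hK hKconv hξK
  have : ξ v ≤ u := calc
    ξ v = ∫ x, g x * f x v ∂μ := hξ v
    _ ≤ ∫ x, g x * u ∂μ := integral_mono_ae (integrable_mul_eval hf hfC hg v)
        (hg.mul_const u) (by filter_upwards [hfK, hg0] with x hxK hx0 using
          mul_le_mul_of_nonneg_left (hKv _ hxK).le hx0)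
    _ = u := by rw [integral_mul_const, hg1, one_mul]
  linarith

end Barycenter

/-- A weak*-measurable essentially bounded function `f : X → E = (E₀)*` has essential
range in a weak*-closed convex set `K` if and only if all its barycenters against
probability densities `g ∈ L¹(X, μ)₊`, `‖g‖₁ = 1`, lie in `K`. -/
theorem stmt_12 {X E₀ : Type*} [MeasurableSpace X]
    [NormedAddCommGroup E₀] [NormedSpace ℝ E₀] [TopologicalSpace.SeparableSpace E₀]
    (μ : Measure X) [IsProbabilityMeasure μ]
    (K : Set (WeakDual ℝ E₀)) (hK : IsClosed K) (hKconv : Convex ℝ K)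
    (f : X → WeakDual ℝ E₀)
    (hmeas : ∀ v : E₀, Measurable fun x => f x v)
    (C : ℝ) (hbdd : ∀ᵐ x ∂μ, ∀ v : E₀, |f x v| ≤ C * ‖v‖) :
    (∀ᵐ x ∂μ, f x ∈ K) ↔
      ∀ g : X → ℝ, Measurable g → Integrable g μ → (∀ᵐ x ∂μ, 0 ≤ g x) →
        ∫ x, g x ∂μ = 1 →
        ∃ ξ ∈ K, ∀ v : E₀, ξ v = ∫ x, g x * f x v ∂μ := by
  set B := toStrongDual ⁻¹' closedBall (0 : StrongDual ℝ E₀) (max C 0)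
  have hfB : ∀ᵐ x ∂μ, ‖toStrongDual (f x)‖ ≤ max C 0 := by
    filter_upwards [hbdd] with x hx
    exact (toStrongDual (f x)).opNorm_le_bound (le_max_right C 0) fun v =>
      (hx v).trans (by gcongr; exact le_max_left C 0)
  constructor
  · intro hfK g _ hg hg0 hg1
    obtain ⟨ξ, hξ⟩ := exists_forall_eval_eq_integral_mul hmeas hfB hg
    exact ⟨ξ, mem_of_forall_eval_eq_integral_mul hK hKconv hmeas hfB hfK hg hg0 hg1 hξ, hξ⟩
  · intro H
    have hBclosed : IsClosed B := isClosed_closedBall 0 _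
    have hBconv : Convex ℝ B :=
      (convex_closedBall _ _).linear_preimage (toStrongDual (𝕜 := ℝ) (E := E₀)).toLinearMap
    obtain ⟨D, hDcount, hD⟩ := TopologicalSpace.exists_countable_dense E₀
    have hDq : ∀ v ∈ D, ∀ q : ℚ, (∀ k ∈ K ∩ B, k v < q) → ∀ᵐ x ∂μ, f x v < q := by
      intro v _ q hKBv
      refine ae_lt_of_forall_integral_mul_lt (hmeas v) ?_ fun g hgm hg hg0 hg1 => ?_
      · simpa using integrable_mul_eval hmeas hfB (integrable_const (1 : ℝ)) v
      obtain ⟨ξ, hξK, hξ⟩ := H g hgm hg hg0 hg1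
      have hξB : ξ ∈ B := mem_of_forall_eval_eq_integral_mul hBclosed hBconv hmeas hfB
        (by simpa [B] using hfB) hg hg0 hg1 hξ
      exact hξ v ▸ hKBv ξ ⟨hξK, hξB⟩
    have hae : ∀ᵐ x ∂μ, ∀ v ∈ D, ∀ q : ℚ, (∀ k ∈ K ∩ B, k v < q) → f x v < q := by
      simpa only [ae_ball_iff hDcount, ae_all_iff, eventually_imp_distrib_left] using hDq
    filter_upwards [hae, hfB] with x hx hxB
    exact (mem_of_forall_eval_lt_imp_eval_lt (hK.inter hBclosed) (hKconv.inter hBconv)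
      (fun k hk => by simpa [B] using hk.2) hD hxB hx).1
end
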